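/- arXiv:gr-qc/0501020 — 5 statements merged into one kernel-verified Lean document; each statement's English description precedes it below -/
import Mathlib

section
/- If M > 0, Λ > 0, 9M²Λ < 1, and r_b < r_c are the two positive roots of V(r) = 1 - 2M/r - Λr²/3, then 2M < r_b < 3M < 1/√Λ < r_c < 3/√Λ. -/
set_option maxHeartbeats 1000000 in
/-- If `M > 0`, `Λ > 0`, `9 M² Λ < 1`, and `r_b < r_c` are the two
positive roots of `V r = 1 - 2M/r - Λ r²/3`, then
`2M < r_b < 3M < 1/√Λ < r_c < 3/√Λ`. -/
theorem kssds_horizon_bounds (M Λ rb rc : ℝ) (hM : 0 < M) (hΛ : 0 < Λ)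
    (h : 9 * M ^ 2 * Λ < 1) (hrb : 0 < rb) (hrc : 0 < rc) (hlt : rb < rc)
    (hVb : 1 - 2 * M / rb - Λ * rb ^ 2 / 3 = 0)
    (hVc : 1 - 2 * M / rc - Λ * rc ^ 2 / 3 = 0) :
    2 * M < rb ∧ rb < 3 * M ∧ 3 * M < 1 / Real.sqrt Λ ∧
      1 / Real.sqrt Λ < rc ∧ rc < 3 / Real.sqrt Λ := by
  have eb : Λ * rb ^ 3 - 3 * rb + 6 * M = 0 := by
    have h' := hVb
    field_simp at h'
    nlinarith [h']
  have ec : Λ * rc ^ 3 - 3 * rc + 6 * M = 0 := by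
    have h' := hVc
    field_simp at h'
    nlinarith [h']
  have hfac : (rc - rb) * (Λ * (rb ^ 2 + rb * rc + rc ^ 2) - 3) = 0 := by
    nlinarith [eb, ec]
  have key1 : Λ * (rb ^ 2 + rb * rc + rc ^ 2) = 3 := by
    rcases mul_eq_zero.mp hfac with h0 | h0
    · linarith [sub_pos.mpr hlt]
    · linarith
  have key2 : Λ * (rb * rc * (rb + rc)) = 6 * M := by nlinarith [eb, key1]
  clear eb ec hfac hVb hVc
  have hrb1 : Λ * rb ^ 2 < 1 := by nlinarith [key1, mul_pos hrb hrc, sq_nonneg (rb - rc)]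
  have hrc1 : 1 < Λ * rc ^ 2 := by nlinarith [key1, mul_pos hrb hrc]
  have hrc3 : Λ * rc ^ 2 < 9 := by nlinarith [key1, mul_pos hrb hrc, sq_nonneg rb]
  have g1 : 2 * M < rb := by
    have hd : 3 * rb - 6 * M = Λ * rb ^ 3 := by linear_combination key2 - rb * key1
    nlinarith [mul_pos hΛ (pow_pos hrb 3)]
  have g2 : rb < 3 * M := by
    have hd : 6 * M - 2 * rb = rb - Λ * rb ^ 3 := by
      linear_combination rb * key1 - key2
    nlinarith [mul_pos hrb (sub_pos.mpr hrb1)]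
  set s := Real.sqrt Λ with hs
  have hs0 : 0 < s := Real.sqrt_pos.mpr hΛ
  have hs2 : s ^ 2 = Λ := Real.sq_sqrt hΛ.le
  have g3 : 3 * M < 1 / s := by
    rw [lt_div_iff₀ hs0]
    nlinarith [sq_nonneg (3 * M * s - 1), mul_pos (mul_pos (by norm_num : (0:ℝ) < 3) hM) hs0]
  have g4 : 1 / s < rc := by
    rw [div_lt_iff₀ hs0]
    nlinarith [mul_pos hrc hs0]
  have g5 : rc < 3 / s := by
    rw [lt_div_iff₀ hs0]
    nlinarith [mul_pos hrc hs0]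
  exact ⟨g1, g2, g3, g4, g5⟩
end

section
/- Let M > 0, Λ > 0 with 9M²Λ < 1 and set ξ ∈ (0, π/2) by cos ξ = 3M√Λ. Then r₁ := (2/√Λ)·cos((ξ+π)/3) and r₂ := (2/√Λ)·cos((ξ−π)/3) are both roots of V(r) = 1 - 2M/r - Λr²/3 = 0, and 0 < r₁ < r₂. -/
/-- With `ξ ∈ (0, π/2)` defined by `cos ξ = 3M√Λ`, the numbers
`r₁ = (2/√Λ) cos((ξ+π)/3)` and `r₂ = (2/√Λ) cos((ξ-π)/3)` are roots of
`V r = 1 - 2M/r - Λr²/3`, and `0 < r₁ < r₂`. -/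
theorem kssds_horizons_trig (M Λ ξ : ℝ) (hM : 0 < M) (hΛ : 0 < Λ)
    (h : 9 * M ^ 2 * Λ < 1) (hξ0 : 0 < ξ) (hξ1 : ξ < Real.pi / 2)
    (hcos : Real.cos ξ = 3 * M * Real.sqrt Λ) :
    (1 - 2 * M / (2 / Real.sqrt Λ * Real.cos ((ξ + Real.pi) / 3)) -
        Λ * (2 / Real.sqrt Λ * Real.cos ((ξ + Real.pi) / 3)) ^ 2 / 3 = 0) ∧
    (1 - 2 * M / (2 / Real.sqrt Λ * Real.cos ((ξ - Real.pi) / 3)) -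
        Λ * (2 / Real.sqrt Λ * Real.cos ((ξ - Real.pi) / 3)) ^ 2 / 3 = 0) ∧
    0 < 2 / Real.sqrt Λ * Real.cos ((ξ + Real.pi) / 3) ∧
    2 / Real.sqrt Λ * Real.cos ((ξ + Real.pi) / 3) <
      2 / Real.sqrt Λ * Real.cos ((ξ - Real.pi) / 3) := by
  have hπ := Real.pi_pos
  set s := Real.sqrt Λ with hs
  have hs0 : 0 < s := Real.sqrt_pos.mpr hΛ
  have hs2 : s ^ 2 = Λ := Real.sq_sqrt hΛ.le
  set c₁ := Real.cos ((ξ + Real.pi) / 3) with hc1def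
  set c₂ := Real.cos ((ξ - Real.pi) / 3) with hc2def
  -- positivity of c₁
  have hθ1 : (ξ + Real.pi) / 3 < Real.pi / 2 := by linarith
  have hc1pos : 0 < c₁ := Real.cos_pos_of_mem_Ioo ⟨by linarith, hθ1⟩
  -- c₂ = cos((π - ξ)/3) and comparison
  have hc2eq : c₂ = Real.cos ((Real.pi - ξ) / 3) := by
    rw [hc2def, ← Real.cos_neg]; ring_nf
  have hlt : c₁ < c₂ := by
    rw [hc2eq]
    apply Real.cos_lt_cos_of_nonneg_of_le_pi (by linarith) (by linarith) (by linarith)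
  have hc2pos : 0 < c₂ := lt_trans hc1pos hlt
  -- cubic identities
  have hcube1 : 4 * c₁ ^ 3 - 3 * c₁ = -(3 * M * s) := by
    have := Real.cos_three_mul ((ξ + Real.pi) / 3)
    rw [show 3 * ((ξ + Real.pi) / 3) = ξ + Real.pi by ring, Real.cos_add_pi, hcos] at this
    linarith [this]
  have hcube2 : 4 * c₂ ^ 3 - 3 * c₂ = -(3 * M * s) := by
    have := Real.cos_three_mul ((ξ - Real.pi) / 3)
    rw [show 3 * ((ξ - Real.pi) / 3) = ξ - Real.pi by ring, Real.cos_sub_pi, hcos] at this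
    linarith [this]
  have key : ∀ c : ℝ, 0 < c → 4 * c ^ 3 - 3 * c = -(3 * M * s) →
      1 - 2 * M / (2 / s * c) - Λ * (2 / s * c) ^ 2 / 3 = 0 := by
    intro c hc hcu
    have hcne : c ≠ 0 := hc.ne'
    have hsne : s ≠ 0 := hs0.ne'
    field_simp
    rw [← hs2]
    nlinarith [hcu, hs0, hc, sq_nonneg s, sq_nonneg c]
  refine ⟨key c₁ hc1pos hcube1, key c₂ hc2pos hcube2, by positivity, ?_⟩
  have h2s : 0 < 2 / s := by positivity
  exact mul_lt_mul_of_pos_left hlt h2s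
end

section
/- Let Λ > 0 and M > 0 with 9M²Λ < 1. For C = 0 and |K| < √(3Λ), let r_min(K) < r_max(K) denote the two positive roots of D_K(r) = 1 - 2M/r - (Λ - K²/3)r²/3. Then r_min is strictly decreasing and r_max strictly increasing in |K|; in particular r_min(K) ≤ r_b and r_max(K) ≥ r_c, where r_b, r_c are the roots for K = 0. -/
/-- If `D(r) = 1 - 2M/r - c r²/3 > 0` at some positive `r`, and the only
positive zeros of `D` are `a ≤ b`, then `a < r < b`. -/
lemma kssds_sign_aux (M c : ℝ) (hM : 0 < M) (hc : 0 < c) (a b : ℝ)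
    (ha : 0 < a) (hab : a ≤ b)
    (honly : ∀ r : ℝ, 0 < r → 1 - 2 * M / r - c * r ^ 2 / 3 = 0 → r = a ∨ r = b)
    (r : ℝ) (hr : 0 < r) (hD : 0 < 1 - 2 * M / r - c * r ^ 2 / 3) :
    a < r ∧ r < b := by
  set f : ℝ → ℝ := fun x => 1 - 2 * M / x - c * x ^ 2 / 3 with hf
  have hcont : ∀ s t : ℝ, 0 < s → ContinuousOn f (Set.Icc s t) := by
    intro s t hs
    apply ContinuousOn.sub
    · apply ContinuousOn.sub continuousOn_const
      exact ContinuousOn.div continuousOn_const continuousOn_id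
        (fun x hx => ne_of_gt (lt_of_lt_of_le hs hx.1))
    · exact (Continuous.continuousOn (by continuity))
  have hfneg : ∀ x : ℝ, 0 < x → x - 2 * M - c * x ^ 3 / 3 < 0 → f x < 0 := by
    intro x hx hlt
    by_contra hge
    push_neg at hge
    have hxne : x ≠ 0 := ne_of_gt hx
    have key : x * f x = x - 2 * M - c * x ^ 3 / 3 := by
      simp only [hf]; field_simp
    have h3 : 0 ≤ x * f x := mul_nonneg hx.le hge
    rw [key] at h3
    linarith
  constructor
  · -- a < r
    by_contra hle
    push_neg at hle  -- r ≤ a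
    set ε : ℝ := min M (r / 2) with hε
    have hε0 : 0 < ε := lt_min hM (by linarith)
    have hεM : ε ≤ M := min_le_left _ _
    have hεr : ε < r := lt_of_le_of_lt (min_le_right _ _) (by linarith)
    have hfε : f ε < 0 := by
      apply hfneg ε hε0
      nlinarith [pow_pos hε0 3]
    have := intermediate_value_Icc hεr.le (hcont ε r hε0)
    have h0 : (0 : ℝ) ∈ Set.Icc (f ε) (f r) := ⟨hfε.le, hD.le⟩
    obtain ⟨z, hz, hz0⟩ := this h0
    have hz1 : 0 < z := lt_of_lt_of_le hε0 hz.1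
    have hzr : z < r := lt_of_le_of_ne hz.2 (by rintro rfl; exact absurd hz0 (ne_of_gt hD))
    rcases honly z hz1 hz0 with rfl | rfl
    · linarith
    · linarith
  · -- r < b
    by_contra hle
    push_neg at hle  -- b ≤ r
    obtain ⟨R, hR⟩ : ∃ R : ℝ, R = r + Real.sqrt (3 / c) + 1 := ⟨_, rfl⟩
    have hs0 : 0 ≤ Real.sqrt (3 / c) := Real.sqrt_nonneg _
    have hRr : r < R := by rw [hR]; linarith
    have hR0 : 0 < R := lt_trans hr hRr
    have hRs : Real.sqrt (3 / c) < R := by rw [hR]; linarith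
    have hR2 : 3 / c < R ^ 2 := by
      nlinarith [Real.sq_sqrt (le_of_lt (div_pos (show (0:ℝ) < 3 by norm_num) hc)), hRs, hs0]
    have hcR : 3 < c * R ^ 2 := by
      rw [div_lt_iff₀ hc] at hR2; linarith [hR2]
    have hfR : f R < 0 := by
      apply hfneg R hR0
      nlinarith [mul_lt_mul_of_pos_left hcR hR0, hM]
    have := intermediate_value_Icc' hRr.le (hcont r R hr)
    have h0 : (0 : ℝ) ∈ Set.Icc (f R) (f r) := ⟨hfR.le, hD.le⟩
    obtain ⟨z, hz, hz0⟩ := this h0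
    have hz1 : 0 < z := lt_of_lt_of_le hr hz.1
    have hzr : r < z := lt_of_le_of_ne hz.1 (by rintro rfl; exact absurd hz0 (ne_of_gt hD))
    rcases honly z hz1 hz0 with rfl | rfl
    · linarith
    · linarith

/-- For `C = 0`, `|K| < √(3Λ)`, let `rmin K < rmax K` be the two
positive roots of `D_K r = 1 - 2M/r - (Λ - K²/3) r²/3`.  Then `rmin` is strictly
decreasing and `rmax` strictly increasing in `|K|`; in particular
`rmin K ≤ r_b = rmin 0` and `rmax K ≥ r_c = rmax 0`. -/
theorem kssds_rmin_rmax_monotone (Λ M : ℝ) (hΛ : 0 < Λ) (hM : 0 < M)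
    (h : 9 * M ^ 2 * Λ < 1) (rmin rmax : ℝ → ℝ)
    (hpos : ∀ K : ℝ, K ^ 2 < 3 * Λ → 0 < rmin K ∧ rmin K < rmax K)
    (hroot : ∀ K : ℝ, K ^ 2 < 3 * Λ →
      (1 - 2 * M / rmin K - (Λ - K ^ 2 / 3) * (rmin K) ^ 2 / 3 = 0) ∧
      (1 - 2 * M / rmax K - (Λ - K ^ 2 / 3) * (rmax K) ^ 2 / 3 = 0))
    (honly : ∀ K : ℝ, K ^ 2 < 3 * Λ → ∀ r : ℝ, 0 < r →
      1 - 2 * M / r - (Λ - K ^ 2 / 3) * r ^ 2 / 3 = 0 →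
      r = rmin K ∨ r = rmax K) :
    (∀ K₁ K₂ : ℝ, K₁ ^ 2 < K₂ ^ 2 → K₂ ^ 2 < 3 * Λ →
      rmin K₂ < rmin K₁ ∧ rmax K₁ < rmax K₂) ∧
    (∀ K : ℝ, K ^ 2 < 3 * Λ → rmin K ≤ rmin 0 ∧ rmax 0 ≤ rmax K) := by
  have main : ∀ K₁ K₂ : ℝ, K₁ ^ 2 < K₂ ^ 2 → K₂ ^ 2 < 3 * Λ →
      rmin K₂ < rmin K₁ ∧ rmax K₁ < rmax K₂ := by
    intro K₁ K₂ h12 h2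
    have h1 : K₁ ^ 2 < 3 * Λ := lt_trans h12 h2
    obtain ⟨hp1, hlt1⟩ := hpos K₁ h1
    obtain ⟨hp2, hlt2⟩ := hpos K₂ h2
    have hq1 : 0 < rmax K₁ := lt_trans hp1 hlt1
    have hc2 : 0 < Λ - K₂ ^ 2 / 3 := by linarith
    -- D_{K₂} is positive at both roots of D_{K₁}
    have hD1 : 0 < 1 - 2 * M / rmin K₁ - (Λ - K₂ ^ 2 / 3) * (rmin K₁) ^ 2 / 3 := by
      have := (hroot K₁ h1).1
      nlinarith [pow_pos hp1 2]
    have hD2 : 0 < 1 - 2 * M / rmax K₁ - (Λ - K₂ ^ 2 / 3) * (rmax K₁) ^ 2 / 3 := by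
      have := (hroot K₁ h1).2
      nlinarith [pow_pos hq1 2]
    have s1 := kssds_sign_aux M (Λ - K₂ ^ 2 / 3) hM hc2 (rmin K₂) (rmax K₂)
      hp2 hlt2.le (honly K₂ h2) (rmin K₁) hp1 hD1
    have s2 := kssds_sign_aux M (Λ - K₂ ^ 2 / 3) hM hc2 (rmin K₂) (rmax K₂)
      hp2 hlt2.le (honly K₂ h2) (rmax K₁) hq1 hD2
    exact ⟨s1.1, s2.2⟩
  refine ⟨main, ?_⟩
  intro K hK
  rcases eq_or_lt_of_le (sq_nonneg K) with h0 | h0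
  · have : K = 0 := by
      have := pow_eq_zero_iff (n := 2) (by norm_num) |>.mp h0.symm
      exact this
    rw [this]
    exact ⟨le_refl _, le_refl _⟩
  · have h0' : (0 : ℝ) ^ 2 < K ^ 2 := by simpa using h0
    obtain ⟨a, b⟩ := main 0 K h0' hK
    exact ⟨a.le, b.le⟩
end

section
/- Let r : ℝ → ℝ be smooth and satisfy the autonomous first-order relation (r')² = D(r) for a smooth function D, on a region where composition makes sense. Then r' solves the linearized equation α'' + (2r'/r)α' + aα = 0 with a = Λ − K²/3 − 6C²/r⁶, provided D(r) = 1 − 2(M + CK/3)/r − (Λ − K²/3)r²/3 + C²/r⁴; i.e., differentiating twice, 2r'·r'' = D'(r)·r' and (r')''' computed from the constraint yields that α = r' satisfies the stated ODE. -/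
open Filter Set

/-- Auxiliary: a continuous function vanishing where `g ≠ 0` and on the interior of
`{g = 0}` vanishes everywhere. -/
lemma aux_eq_zero_of_dense_cond {f g : ℝ → ℝ} (hf : Continuous f)
    (h1 : ∀ x, g x ≠ 0 → f x = 0)
    (h2 : ∀ x ∈ interior {t | g t = 0}, f x = 0) : ∀ x, f x = 0 := by
  intro x
  by_cases hx : x ∈ closure {t | g t ≠ 0}
  · have hEq : Set.EqOn f 0 {t | g t ≠ 0} := fun t ht => h1 t ht
    exact hEq.closure hf continuous_const hx
  · have hset : ({t : ℝ | g t ≠ 0})ᶜ = {t | g t = 0} := by ext t; simp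
    have : x ∈ interior ({t : ℝ | g t ≠ 0})ᶜ := by
      rw [interior_compl]; exact hx
    rw [hset] at this
    exact h2 x this

/-- If `r` is smooth, positive, and satisfies `(r')² = D ∘ r` with
`D r = 1 - 2(M + CK/3)/r - (Λ - K²/3) r²/3 + C²/r⁴`, then `α = r'` solves the
lapse equation `α'' + (2r'/r)α' + (Λ - K²/3 - 6C²/r⁶)α = 0`. -/
theorem killing_lapse_solves_ode (Λ M K C : ℝ) (r : ℝ → ℝ)
    (hr : ContDiff ℝ (⊤ : ℕ∞) r) (hrpos : ∀ l, 0 < r l)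
    (hconstraint : ∀ l, (deriv r l) ^ 2 =
      1 - 2 * (M + C * K / 3) / r l - (Λ - K ^ 2 / 3) * (r l) ^ 2 / 3 +
        C ^ 2 / (r l) ^ 4) :
    ∀ l, deriv (deriv (deriv r)) l +
      2 * deriv r l / r l * deriv (deriv r) l +
      (Λ - K ^ 2 / 3 - 6 * C ^ 2 / (r l) ^ 6) * deriv r l = 0 := by
  have hrne : ∀ l, r l ≠ 0 := fun l => (hrpos l).ne'
  set A : ℝ := M + C * K / 3 with hA
  set B : ℝ := Λ - K ^ 2 / 3 with hB
  have hr' : ContDiff ℝ ((⊤ : ℕ∞) : WithTop ℕ∞) r := hr.of_le (by simp)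
  have hd0 : Differentiable ℝ r := hr'.differentiable (by simp)
  have hc1 : ContDiff ℝ ((⊤ : ℕ∞) : WithTop ℕ∞) (deriv r) :=
    (contDiff_infty_iff_deriv.mp hr').2
  have hd1 : Differentiable ℝ (deriv r) := hc1.differentiable (by simp)
  have hc2 : ContDiff ℝ ((⊤ : ℕ∞) : WithTop ℕ∞) (deriv (deriv r)) :=
    (contDiff_infty_iff_deriv.mp hc1).2
  have hd2 : Differentiable ℝ (deriv (deriv r)) := hc2.differentiable (by simp)
  have hc3 : ContDiff ℝ ((⊤ : ℕ∞) : WithTop ℕ∞) (deriv (deriv (deriv r))) :=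
    (contDiff_infty_iff_deriv.mp hc2).2
  -- first differentiation of the constraint
  have key1 : ∀ l, 2 * deriv r l * deriv (deriv r) l =
      (2 * A / (r l) ^ 2 - 2 * B * r l / 3 - 4 * C ^ 2 / (r l) ^ 5) * deriv r l := by
    intro l
    have hR : HasDerivAt r (deriv r l) l := (hd0 l).hasDerivAt
    have h1 : HasDerivAt (fun t => (deriv r t) ^ 2)
        (2 * deriv r l * deriv (deriv r) l) l := by
      have h : HasDerivAt (fun t => (deriv r t) ^ 2)
          ((2 : ℕ) * deriv r l ^ (2 - 1) * deriv (deriv r) l) l := ((hd1 l).hasDerivAt).pow 2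
      convert h using 1
      push_cast
      ring
    have hterm1 := (hasDerivAt_const l (2 * A)).div hR (hrne l)
    have hterm2 := ((hR.pow 2).const_mul B).div_const 3
    have hterm3 := (hasDerivAt_const l (C ^ 2)).div (hR.pow 4) (pow_ne_zero 4 (hrne l))
    have h2 := (((hasDerivAt_const l (1:ℝ)).sub hterm1).sub hterm2).add hterm3
    have heq : (fun t => (deriv r t) ^ 2) =
        fun t => 1 - 2 * A / r t - B * (r t) ^ 2 / 3 + C ^ 2 / (r t) ^ 4 :=
      funext hconstraint
    rw [heq] at h1
    have hun := h1.unique h2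
    rw [hun]
    simp only [Pi.pow_apply]
    have hne := hrne l
    field_simp
    ring
  -- the statement on the set where r' ≠ 0
  have hU : ∀ l, deriv r l ≠ 0 →
      deriv (deriv (deriv r)) l + 2 * deriv r l / r l * deriv (deriv r) l +
        (B - 6 * C ^ 2 / (r l) ^ 6) * deriv r l = 0 := by
    intro l hl
    have hev : ∀ᶠ t in nhds l, deriv r t ≠ 0 :=
      hc1.continuous.continuousAt.eventually_ne hl
    have heq2 : (fun t => 2 * deriv (deriv r) t) =ᶠ[nhds l]
        (fun t => 2 * A / (r t) ^ 2 - 2 * B * r t / 3 - 4 * C ^ 2 / (r t) ^ 5) := by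
      filter_upwards [hev] with t ht
      have hk : (2 * deriv (deriv r) t) * deriv r t =
          (2 * A / (r t) ^ 2 - 2 * B * r t / 3 - 4 * C ^ 2 / (r t) ^ 5) * deriv r t := by
        linear_combination key1 t
      exact mul_right_cancel₀ ht hk
    have hR : HasDerivAt r (deriv r l) l := (hd0 l).hasDerivAt
    have ht1 := (hasDerivAt_const l (2 * A)).div (hR.pow 2) (pow_ne_zero 2 (hrne l))
    have ht2 := (hR.const_mul (2 * B)).div_const 3
    have ht3 := (hasDerivAt_const l (4 * C ^ 2)).div (hR.pow 5) (pow_ne_zero 5 (hrne l))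
    have hg := (ht1.sub ht2).sub ht3
    have h2r := hg.congr_of_eventuallyEq heq2
    have h2r' : HasDerivAt (fun t => 2 * deriv (deriv r) t)
        (2 * deriv (deriv (deriv r)) l) l := ((hd2 l).hasDerivAt).const_mul 2
    have h3 := h2r'.unique h2r
    have hne := hrne l
    have h3' : 2 * deriv (deriv (deriv r)) l =
        ((-4) * A / (r l) ^ 3 - 2 * B / 3 + 20 * C ^ 2 / (r l) ^ 6) * deriv r l := by
      rw [h3]
      simp only [Pi.pow_apply]
      field_simp
      ring
    have h2l : 2 * deriv (deriv r) l =
        2 * A / (r l) ^ 2 - 2 * B * r l / 3 - 4 * C ^ 2 / (r l) ^ 5 :=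
      heq2.eq_of_nhds
    have hv : deriv (deriv r) l =
        (2 * A / (r l) ^ 2 - 2 * B * r l / 3 - 4 * C ^ 2 / (r l) ^ 5) / 2 := by
      linear_combination h2l / 2
    have hw : deriv (deriv (deriv r)) l =
        ((-4) * A / (r l) ^ 3 - 2 * B / 3 + 20 * C ^ 2 / (r l) ^ 6) * deriv r l / 2 := by
      linear_combination h3' / 2
    rw [hv, hw]
    field_simp
    ring
  -- the statement on the interior of the zero set of r'
  have h2z : ∀ t ∈ interior {t | deriv r t = 0}, deriv (deriv r) t = 0 := by
    intro t ht
    have hev : deriv r =ᶠ[nhds t] fun _ => 0 := by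
      filter_upwards [mem_interior_iff_mem_nhds.mp ht] with s hs using hs
    have := hev.deriv_eq
    simpa using this
  have hZ : ∀ l ∈ interior {t | deriv r t = 0},
      deriv (deriv (deriv r)) l + 2 * deriv r l / r l * deriv (deriv r) l +
        (B - 6 * C ^ 2 / (r l) ^ 6) * deriv r l = 0 := by
    intro l hl
    have hev2 : deriv (deriv r) =ᶠ[nhds l] fun _ => 0 := by
      filter_upwards [isOpen_interior.mem_nhds hl] with s hs using h2z s hs
    have h3z : deriv (deriv (deriv r)) l = 0 := by simpa using hev2.deriv_eq
    have h1z' : l ∈ {t | deriv r t = 0} := interior_subset hl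
    have h1z : deriv r l = 0 := h1z'
    rw [h1z, h2z l hl, h3z]
    ring
  -- continuity of the ODE expression
  have hcont : Continuous (fun l => deriv (deriv (deriv r)) l +
      2 * deriv r l / r l * deriv (deriv r) l +
      (B - 6 * C ^ 2 / (r l) ^ 6) * deriv r l) := by
    apply Continuous.add
    apply Continuous.add
    · exact hc3.continuous
    · exact ((continuous_const.mul hc1.continuous).div hr'.continuous hrne).mul hc2.continuous
    · exact (continuous_const.sub (continuous_const.div (hr'.continuous.pow 6)
        (fun l => pow_ne_zero 6 (hrne l)))).mul hc1.continuous
  exact aux_eq_zero_of_dense_cond hcont hU hZ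
end

section
/- Let g : (0,∞) → ℝ be positive, strictly decreasing, and convex, and let h(x) = x^{-1/3}·g(x). Then h is convex on (0,∞). Consequently, if additionally h is positive, then h^{3/2} is convex. -/
open Set

lemma convexOn_rpow_nonpos {p : ℝ} (hp : p ≤ 0) :
    ConvexOn ℝ (Ioi (0 : ℝ)) fun x : ℝ => x ^ p := by
  refine ⟨convex_Ioi _, fun x hx y hy a b ha hb hab => ?_⟩
  have hx' : (0 : ℝ) < x := hx
  have hy' : (0 : ℝ) < y := hy
  have hz : (0 : ℝ) < a • x + b • y := (convex_Ioi (0 : ℝ)) hx hy ha hb hab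
  simp only [smul_eq_mul] at *
  have hlog : a * Real.log x + b * Real.log y ≤ Real.log (a * x + b * y) :=
    strictConcaveOn_log_Ioi.concaveOn.2 hx hy ha hb hab
  have h1 : Real.log (a * x + b * y) * p ≤ (a * (Real.log x * p) + b * (Real.log y * p)) := by
    nlinarith [mul_le_mul_of_nonpos_right hlog hp]
  calc (a * x + b * y) ^ p = Real.exp (Real.log (a * x + b * y) * p) :=
        Real.rpow_def_of_pos hz p
    _ ≤ Real.exp (a * (Real.log x * p) + b * (Real.log y * p)) := Real.exp_le_exp.2 h1
    _ ≤ a * Real.exp (Real.log x * p) + b * Real.exp (Real.log y * p) :=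
        convexOn_exp.2 (mem_univ _) (mem_univ _) ha hb hab
    _ = a * x ^ p + b * y ^ p := by
        rw [Real.rpow_def_of_pos hx' p, Real.rpow_def_of_pos hy' p]

/-- If `g : (0,∞) → ℝ` is twice differentiable, positive, strictly
decreasing and convex, then `h x = x^(-1/3) g x` is convex on `(0,∞)`;
and if moreover `h > 0` on `(0,∞)`, then `h^(3/2)` is convex on `(0,∞)`. -/
theorem x_pow_mul_convex (g : ℝ → ℝ)
    (hg : ContDiff ℝ 2 g) (hgpos : ∀ x : ℝ, 0 < x → 0 < g x)
    (hgdec : StrictAntiOn g (Ioi (0 : ℝ)))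
    (hgconv : ConvexOn ℝ (Ioi (0 : ℝ)) g) :
    ConvexOn ℝ (Ioi (0 : ℝ)) (fun x : ℝ => x ^ (-(1 : ℝ) / 3) * g x) ∧
    ((∀ x : ℝ, 0 < x → 0 < x ^ (-(1 : ℝ) / 3) * g x) →
      ConvexOn ℝ (Ioi (0 : ℝ))
        (fun x : ℝ => (x ^ (-(1 : ℝ) / 3) * g x) ^ ((3 : ℝ) / 2))) := by
  have hpneg : (-(1 : ℝ) / 3) ≤ 0 := by norm_num
  have hf : ConvexOn ℝ (Ioi (0 : ℝ)) fun x : ℝ => x ^ (-(1 : ℝ) / 3) :=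
    convexOn_rpow_nonpos hpneg
  have hf0 : ∀ ⦃x : ℝ⦄, x ∈ Ioi (0 : ℝ) → 0 ≤ x ^ (-(1 : ℝ) / 3) := fun x hx =>
    (Real.rpow_pos_of_pos hx _).le
  have hg0 : ∀ ⦃x : ℝ⦄, x ∈ Ioi (0 : ℝ) → 0 ≤ g x := fun x hx => (hgpos x hx).le
  -- x ↦ x ^ (-1/3) is antitone on Ioi 0
  have hfanti : ∀ ⦃i j : ℝ⦄, i ∈ Ioi (0 : ℝ) → j ∈ Ioi (0 : ℝ) → j ≤ i →
      i ^ (-(1 : ℝ) / 3) ≤ j ^ (-(1 : ℝ) / 3) := by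
    intro i j hi hj hji
    exact Real.rpow_le_rpow_of_nonpos hj hji hpneg
  have hmono : MonovaryOn (fun x : ℝ => x ^ (-(1 : ℝ) / 3)) g (Ioi (0 : ℝ)) := by
    intro i hi j hj hij
    rcases le_or_gt j i with h | h
    · exact hfanti hi hj h
    · exact absurd (hgdec hi hj h) (not_lt.2 hij.le)
  have hconv : ConvexOn ℝ (Ioi (0 : ℝ)) (fun x : ℝ => x ^ (-(1 : ℝ) / 3) * g x) :=
    hf.mul hgconv hf0 hg0 hmono
  refine ⟨hconv, fun hpos => ?_⟩
  refine ⟨convex_Ioi _, fun x hx y hy a b ha hb hab => ?_⟩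
  set h := fun x : ℝ => x ^ (-(1 : ℝ) / 3) * g x with hh
  have hz : (0 : ℝ) < a • x + b • y := (convex_Ioi (0 : ℝ)) hx hy ha hb hab
  have h1 : h (a • x + b • y) ≤ a * h x + b * h y := by
    simpa using hconv.2 hx hy ha hb hab
  have hhx : 0 ≤ h x := (hpos x hx).le
  have hhy : 0 ≤ h y := (hpos y hy).le
  have h0 : 0 ≤ h (a • x + b • y) := (hpos _ hz).le
  have hsum : 0 ≤ a * h x + b * h y := by positivity
  calc h (a • x + b • y) ^ ((3:ℝ)/2) ≤ (a * h x + b * h y) ^ ((3:ℝ)/2) :=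
        Real.rpow_le_rpow h0 h1 (by norm_num)
    _ ≤ a * h x ^ ((3:ℝ)/2) + b * h y ^ ((3:ℝ)/2) := by
        have := (convexOn_rpow (p := (3:ℝ)/2) (by norm_num)).2
          (mem_Ici.2 hhx) (mem_Ici.2 hhy) ha hb hab
        simpa using this
end
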